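/- Let M = A₁…Aₙ (n ≥ 4) be a convex polygon, no four vertices concyclic. If the circle Cᵢ through A_{i−1}, Aᵢ, A_{i+1} is empty (all other vertices strictly outside), then Rᵢ is a local minimum of the cyclic sequence of circumradii R₁,…,Rₙ provided consecutive circumcenters lie inside the respective vertex angles; analogously a full circle yields a local maximum. -/
import Mathlib


noncomputable def planeDet (u v : ℂ) : ℝ := u.re * v.im - u.im * v.re

def IsConvexPolygon {n : ℕ} (V : ZMod n → ℂ) : Prop :=
  ∀ i j : ZMod n, j ≠ i → j ≠ i + 1 → 0 < planeDet (V (i + 1) - V i) (V j - V i)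

/-- `O i` and `R i` are the circumcenter and circumradius of the triangle
`V (i-1) V i V (i+1)`. -/
def AreCircumData {n : ℕ} (V O : ZMod n → ℂ) (R : ZMod n → ℝ) : Prop :=
  ∀ i : ZMod n, dist (O i) (V (i - 1)) = R i ∧ dist (O i) (V i) = R i ∧
    dist (O i) (V (i + 1)) = R i

/-- Each circumcenter `O i` lies strictly inside the angle `∠ V (i-1) V i V (i+1)`. -/
def CircumcentersInsideAngles {n : ℕ} (V O : ZMod n → ℂ) : Prop :=
  ∀ i : ZMod n, ∃ a b : ℝ, 0 < a ∧ 0 < b ∧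
    O i - V i = a • (V (i - 1) - V i) + b • (V (i + 1) - V i)

/-- No four vertices of the family `V` lie on a common circle. -/
def NoFourConcyclic {n : ℕ} [NeZero n] (V : ZMod n → ℂ) : Prop :=
  ∀ (Q : ℂ) (r : ℝ), Set.ncard {i : ZMod n | dist Q (V i) = r} ≤ 3

lemma key_real (w1 w2 x1 x2 y1 y2 b1 b2 : ℝ)
    (h1 : x1^2 + x2^2 = (x1-w1)^2 + (x2-w2)^2)
    (h2 : y1^2 + y2^2 = (y1-w1)^2 + (y2-w2)^2)
    (h3 : 0 < w1*b2 - w2*b1)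
    (h4 : 0 < w1*x2 - w2*x1)
    (h5 : (y1-b1)^2+(y2-b2)^2 - (y1^2+y2^2) < (x1-b1)^2+(x2-b2)^2 - (x1^2+x2^2)) :
    x1^2+x2^2 < y1^2+y2^2 := by
  have hw : 0 < w1^2 + w2^2 := by
    rcases eq_or_lt_of_le (by positivity : (0:ℝ) ≤ w1^2+w2^2) with h|h
    · have hw1 : w1 = 0 := by nlinarith [sq_nonneg w1, sq_nonneg w2]
      have hw2 : w2 = 0 := by nlinarith [sq_nonneg w1, sq_nonneg w2]
      rw [hw1, hw2] at h3; simp at h3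
    · exact h
  have hb : 0 < (y1-x1)*b1 + (y2-x2)*b2 := by nlinarith [h5]
  have hwxy : (y1-x1)*w1 + (y2-x2)*w2 = 0 := by linear_combination (h2 - h1) / 2
  have hzero : ((y1-x1)*w1 + (y2-x2)*w2) * (w1*b1 + w2*b2) = 0 := by rw [hwxy]; ring
  have hd : w1*x2 - w2*x1 < w1*y2 - w2*y1 := by
    nlinarith [mul_pos hw hb, hzero, h3]
  have hdd : (w1*x2-w2*x1)^2 < (w1*y2-w2*y1)^2 :=
    pow_lt_pow_left₀ hd (le_of_lt h4) (by norm_num)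
  have hx : 2*(x1*w1+x2*w2) = w1^2+w2^2 := by linear_combination h1
  have hy : 2*(y1*w1+y2*w2) = w1^2+w2^2 := by linear_combination h2
  have hxy2 : x1*w1+x2*w2 = y1*w1+y2*w2 := by linarith
  have i1 : (w1^2+w2^2)*(x1^2+x2^2) = (x1*w1+x2*w2)^2 + (w1*x2-w2*x1)^2 := by ring
  have i2 : (w1^2+w2^2)*(y1^2+y2^2) = (y1*w1+y2*w2)^2 + (w1*y2-w2*y1)^2 := by ring
  have hsq : (x1*w1+x2*w2)^2 = (y1*w1+y2*w2)^2 := by rw [hxy2]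
  have hfin : (w1^2+w2^2)*(x1^2+x2^2) < (w1^2+w2^2)*(y1^2+y2^2) := by
    rw [i1, i2, hsq]; linarith
  exact (mul_lt_mul_iff_right₀ hw).mp hfin

lemma dist_sq' (z w : ℂ) : dist z w ^ 2 = (z.re - w.re)^2 + (z.im - w.im)^2 := by
  rw [Complex.dist_eq, Complex.sq_norm, Complex.normSq_apply, Complex.sub_re, Complex.sub_im]
  ring

lemma keyC (P Q X Y B : ℂ)
    (h1 : dist X P = dist X Q) (h2 : dist Y P = dist Y Q)
    (h3 : 0 < planeDet (Q - P) (B - P)) (h4 : 0 < planeDet (Q - P) (X - P))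
    (h5 : dist Y B ^ 2 - dist Y P ^ 2 < dist X B ^ 2 - dist X P ^ 2) :
    dist X P < dist Y P := by
  have h1' := congrArg (· ^ 2) h1
  have h2' := congrArg (· ^ 2) h2
  rw [dist_sq', dist_sq'] at h1' h2'
  rw [dist_sq', dist_sq', dist_sq', dist_sq'] at h5
  simp only [planeDet, Complex.sub_re, Complex.sub_im] at h3 h4
  have := key_real (Q.re - P.re) (Q.im - P.im) (X.re - P.re) (X.im - P.im)
    (Y.re - P.re) (Y.im - P.im) (B.re - P.re) (B.im - P.im)
    (by linear_combination h1') (by linear_combination h2')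
    (by linear_combination h3) (by linear_combination h4)
    (by linear_combination h5)
  refine lt_of_pow_lt_pow_left₀ 2 dist_nonneg ?_
  rw [dist_sq', dist_sq']
  linarith

lemma planeDet_decomp (u v z : ℂ) (a b : ℝ) (h : z = a • v + b • u) :
    planeDet u z = a * planeDet u v := by
  have hre := congrArg Complex.re h
  have him := congrArg Complex.im h
  simp only [Complex.add_re, Complex.add_im, Complex.smul_re, Complex.smul_im,
    smul_eq_mul] at hre him
  unfold planeDet
  linear_combination u.re * him - u.im * hre

/-- Under Musin's circumcenter condition, an empty neighboring circle `Cᵢ`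
(all other vertices strictly outside) yields a local minimum of the cyclic sequence of
circumradii, and a full one (all other vertices strictly inside) yields a local maximum. -/
theorem empty_full_circle_local_extrema (n : ℕ) [NeZero n] (hn : 4 ≤ n) (V O : ZMod n → ℂ)
    (R : ZMod n → ℝ) (hconv : IsConvexPolygon V) (hgen : NoFourConcyclic V)
    (hcirc : AreCircumData V O R) (hin : CircumcentersInsideAngles V O) (i : ZMod n) :
    ((∀ j : ZMod n, j ≠ i - 1 → j ≠ i → j ≠ i + 1 → R i < dist (O i) (V j)) →
      R i ≤ R (i - 1) ∧ R i ≤ R (i + 1)) ∧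
    ((∀ j : ZMod n, j ≠ i - 1 → j ≠ i → j ≠ i + 1 → dist (O i) (V j) < R i) →
      R (i - 1) ≤ R i ∧ R (i + 1) ≤ R i) := by
  -- nonvanishing of small numerals in ZMod n
  have nzN : ∀ k : ℕ, 0 < k → k < 4 → ((k : ZMod n) ≠ 0) := by
    intro k hk1 hk2 h
    rw [ZMod.natCast_eq_zero_iff] at h
    exact absurd (Nat.le_of_dvd hk1 h) (by omega)
  have nz1 : (1 : ZMod n) ≠ 0 := by simpa using nzN 1 (by norm_num) (by norm_num)
  have nz2 : (2 : ZMod n) ≠ 0 := by simpa using nzN 2 (by norm_num) (by norm_num)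
  have nz3 : (3 : ZMod n) ≠ 0 := by simpa using nzN 3 (by norm_num) (by norm_num)
  -- index rewrites
  have e1 : i + 1 - 1 = i := by ring
  have e2 : i + 1 + 1 = i + 2 := by ring
  have e3 : i - 1 - 1 = i - 2 := by ring
  have e4 : i - 1 + 1 = i := by ring
  -- circumcircle data
  obtain ⟨c1, c2, c3⟩ := hcirc i
  obtain ⟨d1, d2, d3⟩ := hcirc (i + 1)
  rw [e1] at d1; rw [e2] at d3
  obtain ⟨f1, f2, f3⟩ := hcirc (i - 1)
  rw [e3] at f1; rw [e4] at f3
  -- convexity facts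
  have conv1 : 0 < planeDet (V (i + 1) - V i) (V (i + 2) - V i) := by
    refine hconv i (i + 2) (fun h => nz2 (by linear_combination h))
      (fun h => nz1 (by linear_combination h))
  have conv2 : 0 < planeDet (V (i + 1) - V i) (V (i - 1) - V i) := by
    refine hconv i (i - 1) (fun h => nz1 (by linear_combination -h))
      (fun h => nz2 (by linear_combination -h))
  have conv3 : 0 < planeDet (V i - V (i - 1)) (V (i - 2) - V (i - 1)) := by
    have := hconv (i - 1) (i - 2) (fun h => nz1 (by linear_combination -h))
      (fun h => nz2 (by linear_combination -h))
    rwa [e4] at this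
  have conv4 : 0 < planeDet (V i - V (i - 1)) (V (i + 1) - V (i - 1)) := by
    have := hconv (i - 1) (i + 1) (fun h => nz2 (by linear_combination h))
      (fun h => nz1 (by linear_combination h))
    rwa [e4] at this
  -- circumcenter-angle facts
  obtain ⟨a, b, ha, hb, heq⟩ := hin i
  obtain ⟨a', b', ha', hb', heq'⟩ := hin (i + 1)
  rw [e1, e2] at heq'
  obtain ⟨a'', b'', ha'', hb'', heq''⟩ := hin (i - 1)
  rw [e3, e4] at heq''
  -- positivity of planeDet for O i relative to chord (V i, V (i+1))
  have pos1 : 0 < planeDet (V (i + 1) - V i) (O i - V i) := by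
    rw [planeDet_decomp (V (i + 1) - V i) (V (i - 1) - V i) _ a b heq]
    exact mul_pos ha conv2
  -- O i relative to chord (V (i-1), V i)
  have pos2 : 0 < planeDet (V i - V (i - 1)) (O i - V (i - 1)) := by
    have hdec : O i - V (i - 1) =
        b • (V (i + 1) - V (i - 1)) + (1 - a - b) • (V i - V (i - 1)) := by
      have heq2 := heq
      simp only [Complex.real_smul] at heq2 ⊢
      push_cast
      linear_combination heq2
    rw [planeDet_decomp (V i - V (i - 1)) (V (i + 1) - V (i - 1)) _ b (1 - a - b) hdec]
    exact mul_pos hb conv4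
  -- O (i+1) relative to chord (V i, V (i+1))
  have pos3 : 0 < planeDet (V (i + 1) - V i) (O (i + 1) - V i) := by
    have hdec : O (i + 1) - V i =
        b' • (V (i + 2) - V i) + (1 - a' - b') • (V (i + 1) - V i) := by
      have heq2 := heq'
      simp only [Complex.real_smul] at heq2 ⊢
      push_cast
      linear_combination heq2
    rw [planeDet_decomp (V (i + 1) - V i) (V (i + 2) - V i) _ b' (1 - a' - b') hdec]
    exact mul_pos hb' conv1
  -- O (i-1) relative to chord (V (i-1), V i)
  have pos4 : 0 < planeDet (V i - V (i - 1)) (O (i - 1) - V (i - 1)) := by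
    rw [planeDet_decomp (V i - V (i - 1)) (V (i - 2) - V (i - 1)) _ a'' b'' heq'']
    exact mul_pos ha'' conv3
  have hRnn : 0 ≤ R i := c2 ▸ dist_nonneg
  constructor
  · -- empty case
    intro hemp
    have hB1 : R i < dist (O i) (V (i + 2)) := by
      refine hemp (i + 2) (fun h => nz3 (by linear_combination h))
        (fun h => nz2 (by linear_combination h)) (fun h => nz1 (by linear_combination h))
    have hB2 : R i < dist (O i) (V (i - 2)) := by
      refine hemp (i - 2) (fun h => nz1 (by linear_combination -h))
        (fun h => nz2 (by linear_combination -h)) (fun h => nz3 (by linear_combination -h))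
    constructor
    · -- R i ≤ R (i-1)
      have := keyC (V (i - 1)) (V i) (O i) (O (i - 1)) (V (i - 2))
        (c1.trans c2.symm) (f2.trans f3.symm) conv3 pos2
        (by
          rw [f1, f2, c1]
          have : R i ^ 2 < dist (O i) (V (i - 2)) ^ 2 :=
            pow_lt_pow_left₀ hB2 hRnn (by norm_num)
          linarith)
      rw [c1, f2] at this
      exact this.le
    · -- R i ≤ R (i+1)
      have := keyC (V i) (V (i + 1)) (O i) (O (i + 1)) (V (i + 2))
        (c2.trans c3.symm) (d1.trans d2.symm) conv1 pos1
        (by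
          rw [d3, d1, c2]
          have : R i ^ 2 < dist (O i) (V (i + 2)) ^ 2 :=
            pow_lt_pow_left₀ hB1 hRnn (by norm_num)
          linarith)
      rw [c2, d1] at this
      exact this.le
  · -- full case
    intro hful
    have hB1 : dist (O i) (V (i + 2)) < R i := by
      refine hful (i + 2) (fun h => nz3 (by linear_combination h))
        (fun h => nz2 (by linear_combination h)) (fun h => nz1 (by linear_combination h))
    have hB2 : dist (O i) (V (i - 2)) < R i := by
      refine hful (i - 2) (fun h => nz1 (by linear_combination -h))
        (fun h => nz2 (by linear_combination -h)) (fun h => nz3 (by linear_combination -h))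
    constructor
    · -- R (i-1) ≤ R i
      have := keyC (V (i - 1)) (V i) (O (i - 1)) (O i) (V (i - 2))
        (f2.trans f3.symm) (c1.trans c2.symm) conv3 pos4
        (by
          rw [f1, f2, c1]
          have : dist (O i) (V (i - 2)) ^ 2 < R i ^ 2 :=
            pow_lt_pow_left₀ hB2 dist_nonneg (by norm_num)
          linarith)
      rw [c1, f2] at this
      exact this.le
    · -- R (i+1) ≤ R i
      have := keyC (V i) (V (i + 1)) (O (i + 1)) (O i) (V (i + 2))
        (d1.trans d2.symm) (c2.trans c3.symm) conv1 pos3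
        (by
          rw [d3, d1, c2]
          have : dist (O i) (V (i + 2)) ^ 2 < R i ^ 2 :=
            pow_lt_pow_left₀ hB1 dist_nonneg (by norm_num)
          linarith)
      rw [c2, d1] at this
      exact this.le
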